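/- Fix β, η > 0 and z^k = (v^k; y^k) ∈ ℝ^{m₁+m₂}. Then z^{k+1} = T_W(z^k) holds if and only if v^{k+1} = prox_{βg}(v^k − β(∇f(v^k) + Dᵀy^k)) and y^{k+1} = prox_{η ι_d*}(y^k + ηD(2v^{k+1} − v^k)); that is, the implicit fixed-point iteration of T_W admits this explicit two-step form. -/

import Mathlib

/-!
The shift `u = W⁻¹(∇f(v), 0)` satisfies `u₁ = β(∇f(v) + Dᵀu₂)` and `u₂ = ηDu₁`, so the two
prox arguments defining `T_G(z − u)` are literally those of the explicit two-step scheme; this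
gives one direction. For the other, both prox sets are singletons: `βg` and `ι_d*` (a supremum
of linear functions) are convex and proper, and Apollonius's identity for the midpoint of two
prox points `p, q` of `x` yields `‖p − q‖² ≤ 0`.
-/

noncomputable section

open scoped BigOperators

/-- `ℝ^n` with the Euclidean structure. -/
abbrev Euc (n : ℕ) := EuclideanSpace ℝ (Fin n)

/-- Matrix–vector multiplication, landing in Euclidean space. -/
def mVec {p q : ℕ} (A : Matrix (Fin p) (Fin q) ℝ) (v : Euc q) : Euc p :=
  WithLp.toLp 2 (fun i => ∑ j, A i j * v j)

/-- The set of proximity points of an extended-real-valued function `ψ` at `x`: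
`prox_ψ(x) = argmin_u {½‖u−x‖² + ψ(u)}`. -/
def proxSet {n : ℕ} (ψ : Euc n → EReal) (x : Euc n) : Set (Euc n) :=
  {p | ∀ u : Euc n,
    ((1 / 2 * ‖p - x‖ ^ 2 : ℝ) : EReal) + ψ p ≤ ((1 / 2 * ‖u - x‖ ^ 2 : ℝ) : EReal) + ψ u}

/-- The indicator function `ι_d` of the set `{x | x ≥ d}` (componentwise). -/
def iotaInd {n : ℕ} (d : Euc n) : Euc n → EReal :=
  fun y => if ∀ i, d i ≤ y i then (0 : EReal) else ⊤

/-- The convex (Fenchel) conjugate `ψ*(x) = sup_u {⟨x,u⟩ − ψ(u)}`. -/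
def conjFn {n : ℕ} (ψ : Euc n → EReal) : Euc n → EReal :=
  fun x => ⨆ u : Euc n, (((inner ℝ x u : ℝ) : EReal) - ψ u)

/-- The block operator `W = P⁻¹G = [[(1/β)I, −Dᵀ],[−D, (1/η)I]]` on `ℝ^{m₁} × ℝ^{m₂}`. -/
def Wapp {m₁ m₂ : ℕ} (β η : ℝ) (D : Matrix (Fin m₂) (Fin m₁) ℝ)
    (z : Euc m₁ × Euc m₂) : Euc m₁ × Euc m₂ :=
  ((1 / β) • z.1 - mVec D.transpose z.2, -(mVec D z.1) + (1 / η) • z.2)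

/-- The bilinear form `⟨z, Ww⟩` associated with `W`. -/
def ipW {m₁ m₂ : ℕ} (β η : ℝ) (D : Matrix (Fin m₂) (Fin m₁) ℝ)
    (z w : Euc m₁ × Euc m₂) : ℝ :=
  (inner ℝ z.1 (Wapp β η D w).1 : ℝ) + (inner ℝ z.2 (Wapp β η D w).2 : ℝ)

/-- The `W`-weighted norm `‖z‖_W = ⟨z, Wz⟩^{1/2}`. -/
def normW {m₁ m₂ : ℕ} (β η : ℝ) (D : Matrix (Fin m₂) (Fin m₁) ℝ)
    (z : Euc m₁ × Euc m₂) : ℝ :=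
  Real.sqrt (ipW β η D z z)

theorem mVec_eq_toLpLin {p q : ℕ} (A : Matrix (Fin p) (Fin q) ℝ) (v : Euc q) :
    mVec A v = Matrix.toLpLin 2 2 A v := rfl

section Prox

variable {n : ℕ}

theorem eq_of_mem_proxSet_of_map_midpoint_le {φ : Euc n → EReal} {x p q : Euc n}
    {a b : ℝ} (hp : p ∈ proxSet φ x) (hq : q ∈ proxSet φ x) (ha : φ p = a) (hb : φ q = b)
    (hmid : φ (midpoint ℝ p q) ≤ ((a + b) / 2 : ℝ)) : p = q := by
  set m := midpoint ℝ p q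
  have hp' : 1 / 2 * ‖p - x‖ ^ 2 + a ≤ 1 / 2 * ‖m - x‖ ^ 2 + (a + b) / 2 := by
    have := (hp m).trans (add_le_add_right hmid _)
    rw [ha] at this
    exact_mod_cast this
  have hq' : 1 / 2 * ‖q - x‖ ^ 2 + b ≤ 1 / 2 * ‖m - x‖ ^ 2 + (a + b) / 2 := by
    have := (hq m).trans (add_le_add_right hmid _)
    rw [hb] at this
    exact_mod_cast this
  have apollonius := EuclideanGeometry.dist_sq_add_dist_sq_eq_two_mul_dist_midpoint_sq_add_half_dist_sq x p q
  simp only [dist_comm x, dist_eq_norm] at apollonius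
  have : ‖p - q‖ ^ 2 ≤ 0 := by nlinarith
  rw [← sub_eq_zero, ← norm_eq_zero]
  exact pow_eq_zero_iff two_ne_zero |>.mp (le_antisymm this (sq_nonneg _))

theorem proxSet_coe_subsingleton {h : Euc n → ℝ} (hh : ConvexOn ℝ Set.univ h)
    (x : Euc n) : (proxSet (fun u => (h u : EReal)) x).Subsingleton := by
  intro p hp q hq
  refine eq_of_mem_proxSet_of_map_midpoint_le hp hq rfl rfl ?_
  have := hh.2 (Set.mem_univ p) (Set.mem_univ q) (by norm_num : (0 : ℝ) ≤ 1 / 2)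
    (by norm_num : (0 : ℝ) ≤ 1 / 2) (by norm_num)
  have hm : midpoint ℝ p q = (1 / 2 : ℝ) • p + (1 / 2 : ℝ) • q := by
    rw [midpoint_eq_smul_add, smul_add, invOf_eq_inv, one_div]
  rw [hm, EReal.coe_le_coe_iff]
  exact this.trans_eq (by simp only [smul_eq_mul]; ring)

theorem conjFn_midpoint_le (ψ : Euc n → EReal) {p q : Euc n} {a b : ℝ}
    (ha : conjFn ψ p = a) (hb : conjFn ψ q = b) :
    conjFn ψ (midpoint ℝ p q) ≤ ((a + b) / 2 : ℝ) := by
  refine iSup_le fun u => ?_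
  have hpu : ((inner ℝ p u : ℝ) : EReal) - ψ u ≤ a := by
    rw [← ha]; exact le_iSup (fun u => ((inner ℝ p u : ℝ) : EReal) - ψ u) u
  have hqu : ((inner ℝ q u : ℝ) : EReal) - ψ u ≤ b := by
    rw [← hb]; exact le_iSup (fun u => ((inner ℝ q u : ℝ) : EReal) - ψ u) u
  have hinner : inner ℝ (midpoint ℝ p q) u = (inner ℝ p u + inner ℝ q u) / 2 := by
    rw [midpoint_eq_smul_add, invOf_eq_inv, real_inner_smul_left, inner_add_left]; ring
  generalize ψ u = t at hpu hqu ⊢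
  induction t using EReal.rec with
  | bot => simp at hpu
  | top => simp
  | coe c =>
    rw [hinner]
    norm_cast at hpu hqu ⊢
    linarith

theorem ne_top_of_mem_proxSet {φ : Euc n → EReal} {x p : Euc n} (hp : p ∈ proxSet φ x)
    {u : Euc n} (hu : φ u ≠ ⊤) : φ p ≠ ⊤ := by
  intro htop
  have := hp u
  rw [htop, EReal.add_top_of_ne_bot (EReal.coe_ne_bot _), top_le_iff] at this
  exact EReal.add_ne_top (EReal.coe_ne_top _) hu this

theorem inner_le_conjFn_iotaInd (d : Euc n) {x u : Euc n} (hu : ∀ i, d i ≤ u i) :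
    ((inner ℝ x u : ℝ) : EReal) ≤ conjFn (iotaInd d) x := by
  calc ((inner ℝ x u : ℝ) : EReal) = ((inner ℝ x u : ℝ) : EReal) - iotaInd d u := by
        simp [iotaInd, hu]
    _ ≤ conjFn (iotaInd d) x := le_iSup (fun u => ((inner ℝ x u : ℝ) : EReal) - iotaInd d u) u

theorem conjFn_iotaInd_ne_bot (d x : Euc n) : conjFn (iotaInd d) x ≠ ⊥ :=
  ne_bot_of_le_ne_bot (EReal.coe_ne_bot _) (inner_le_conjFn_iotaInd d fun _ => le_rfl)

theorem conjFn_iotaInd_zero (d : Euc n) : conjFn (iotaInd d) 0 = 0 := by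
  refine le_antisymm (iSup_le fun u => ?_)
    (by simpa using inner_le_conjFn_iotaInd d (x := 0) (u := d) fun _ => le_rfl)
  by_cases hu : ∀ i, d i ≤ u i <;> simp [iotaInd, hu]

theorem proxSet_smul_conjFn_iotaInd_subsingleton (d : Euc n) {η : ℝ} (hη : 0 < η)
    (x : Euc n) :
    (proxSet (fun u => ((η : ℝ) : EReal) * conjFn (iotaInd d) u) x).Subsingleton := by
  have hfin : ∀ p ∈ proxSet (fun u => ((η : ℝ) : EReal) * conjFn (iotaInd d) u) x,
      ∃ a : ℝ, conjFn (iotaInd d) p = a := by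
    intro p hp
    have hp_top := ne_top_of_mem_proxSet hp (u := 0) (by simp [conjFn_iotaInd_zero])
    have : conjFn (iotaInd d) p ≠ ⊤ := by
      intro h; rw [h, EReal.coe_mul_top_of_pos hη] at hp_top; exact hp_top rfl
    exact ⟨_, (EReal.coe_toReal this (conjFn_iotaInd_ne_bot d p)).symm⟩
  intro p hp q hq
  obtain ⟨a, ha⟩ := hfin p hp
  obtain ⟨b, hb⟩ := hfin q hq
  have hmid := conjFn_midpoint_le (iotaInd d) ha hb
  obtain ⟨c, hc⟩ : ∃ c : ℝ, conjFn (iotaInd d) (midpoint ℝ p q) = c :=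
    ⟨_, (EReal.coe_toReal (ne_top_of_le_ne_top (EReal.coe_ne_top _) hmid)
      (conjFn_iotaInd_ne_bot d _)).symm⟩
  refine eq_of_mem_proxSet_of_map_midpoint_le (a := η * a) (b := η * b) hp hq
    (by simp only [ha]; norm_cast) (by simp only [hb]; norm_cast) ?_
  rw [hc] at hmid
  simp only [hc]
  norm_cast at hmid ⊢
  nlinarith

end Prox

theorem fst_eq_and_snd_eq_of_Wapp_eq {m₁ m₂ : ℕ} {β η : ℝ} (hβ : β ≠ 0) (hη : η ≠ 0)
    {D : Matrix (Fin m₂) (Fin m₁) ℝ} {u : Euc m₁ × Euc m₂} {w : Euc m₁}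
    (hu : Wapp β η D u = (w, 0)) :
    u.1 = β • (w + mVec D.transpose u.2) ∧ u.2 = η • mVec D u.1 := by
  simp only [Wapp, Prod.mk.injEq] at hu
  obtain ⟨h₁, h₂⟩ := hu
  constructor
  · rw [← h₁, smul_add, smul_sub, smul_smul, mul_one_div_cancel hβ, one_smul, sub_add_cancel]
  · rw [neg_add_eq_zero.mp h₂, smul_smul, mul_one_div_cancel hη, one_smul]

theorem stmt16_general {m₁ m₂ : ℕ} (D : Matrix (Fin m₂) (Fin m₁) ℝ) (d : Euc m₂)
    (f g : Euc m₁ → ℝ)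
    (hgconv : ConvexOn ℝ Set.univ g)
    (β η : ℝ) (hβ : 0 < β) (hη : 0 < η)
    (TG : Euc m₁ × Euc m₂ → Euc m₁ × Euc m₂)
    (hTG : ∀ w : Euc m₁ × Euc m₂,
      (TG w).1 ∈ proxSet (fun u => ((β * g u : ℝ) : EReal))
          (w.1 - β • mVec D.transpose w.2) ∧
      (TG w).2 ∈ proxSet (fun u => ((η : ℝ) : EReal) * conjFn (iotaInd d) u)
          ((2 * η) • mVec D (TG w).1 - η • mVec D w.1 + w.2))
    (Winv : Euc m₁ × Euc m₂ → Euc m₁ × Euc m₂)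
    (hWinv₁ : ∀ z, Wapp β η D (Winv z) = z)
    (zk zk1 : Euc m₁ × Euc m₂) :
    zk1 = TG (zk - Winv (gradient f zk.1, 0)) ↔
      (zk1.1 ∈ proxSet (fun u => ((β * g u : ℝ) : EReal))
          (zk.1 - β • (gradient f zk.1 + mVec D.transpose zk.2)) ∧
       zk1.2 ∈ proxSet (fun u => ((η : ℝ) : EReal) * conjFn (iotaInd d) u)
          (zk.2 + η • mVec D ((2 : ℝ) • zk1.1 - zk.1))) := by
  set u := Winv (gradient f zk.1, 0)
  obtain ⟨hu₁, hu₂⟩ := fst_eq_and_snd_eq_of_Wapp_eq hβ.ne' hη.ne' (hWinv₁ (gradient f zk.1, 0))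
  have hv : (zk - u).1 - β • mVec D.transpose (zk - u).2
      = zk.1 - β • (gradient f zk.1 + mVec D.transpose zk.2) := by
    simp only [Prod.fst_sub, Prod.snd_sub, mVec_eq_toLpLin, map_sub] at hu₁ ⊢
    rw [hu₁]
    module
  have hy : ∀ a, (2 * η) • mVec D a - η • mVec D (zk - u).1 + (zk - u).2
      = zk.2 + η • mVec D ((2 : ℝ) • a - zk.1) := by
    intro a
    simp only [Prod.fst_sub, Prod.snd_sub, mVec_eq_toLpLin, map_sub, map_smul] at hu₂ ⊢
    rw [hu₂]
    module
  obtain ⟨hTv, hTy⟩ := hTG (zk - u)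
  rw [hv] at hTv
  rw [hy] at hTy
  constructor
  · rintro rfl
    exact ⟨hTv, hTy⟩
  · rintro ⟨hv₁, hy₁⟩
    have e₁ := proxSet_coe_subsingleton (hgconv.smul hβ.le) _ hv₁ hTv
    rw [e₁] at hy₁
    exact Prod.ext e₁ (proxSet_smul_conjFn_iotaInd_subsingleton d hη _ hy₁ hTy)

/-- explicit form of the fixed-point iteration of T_W.  For
z^k = (v^k; y^k), one has z^{k+1} = T_W(z^k) if and only if
v^{k+1} = prox_{βg}(v^k − β(∇f(v^k) + Dᵀy^k)) and
y^{k+1} = prox_{η ι_d*}(y^k + ηD(2v^{k+1} − v^k)).  `TG` is characterized by its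
implicit fixed-point property `hTG`, `Winv` is the inverse of `W`,
T_W = T_G ∘ (I − W⁻¹∇r), and `r (v, y) = f v` so `∇r z = (∇f z.1, 0)`. -/
theorem stmt16 {m₁ m₂ : ℕ} (D : Matrix (Fin m₂) (Fin m₁) ℝ) (d : Euc m₂)
    (f g : Euc m₁ → ℝ) (L : ℝ)
    (hfdiff : Differentiable ℝ f) (hfconv : ConvexOn ℝ Set.univ f)
    (hflip : ∀ x y : Euc m₁, ‖gradient f x - gradient f y‖ ≤ L * ‖x - y‖)
    (hgconv : ConvexOn ℝ Set.univ g)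
    (β η : ℝ) (hβ : 0 < β) (hη : 0 < η)
    (TG : Euc m₁ × Euc m₂ → Euc m₁ × Euc m₂)
    (hTG : ∀ w : Euc m₁ × Euc m₂,
      (TG w).1 ∈ proxSet (fun u => ((β * g u : ℝ) : EReal))
          (w.1 - β • mVec D.transpose w.2) ∧
      (TG w).2 ∈ proxSet (fun u => ((η : ℝ) : EReal) * conjFn (iotaInd d) u)
          ((2 * η) • mVec D (TG w).1 - η • mVec D w.1 + w.2))
    (Winv : Euc m₁ × Euc m₂ → Euc m₁ × Euc m₂)
    (hWinv₁ : ∀ z, Wapp β η D (Winv z) = z)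
    (hWinv₂ : ∀ z, Winv (Wapp β η D z) = z)
    (zk zk1 : Euc m₁ × Euc m₂) :
    zk1 = TG (zk - Winv (gradient f zk.1, 0)) ↔
      (zk1.1 ∈ proxSet (fun u => ((β * g u : ℝ) : EReal))
          (zk.1 - β • (gradient f zk.1 + mVec D.transpose zk.2)) ∧
       zk1.2 ∈ proxSet (fun u => ((η : ℝ) : EReal) * conjFn (iotaInd d) u)
          (zk.2 + η • mVec D ((2 : ℝ) • zk1.1 - zk.1))) :=
  stmt16_general D d f g hgconv β η hβ hη TG hTG Winv hWinv₁ zk zk1
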